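/- If preferences of all agents are strict total orders on their acceptable sets, then the housing market admits exactly one allocation in its strict core, namely the one computed by the Top Trading Cycles algorithm. -/

import Mathlib

/-- A housing market: each agent `a` has a strict partial order `pref a` on agents,
where `pref a b c` means `a` prefers the house of `c` to the house of `b` (i.e. `b ≺_a c`). -/
structure HousingMarket (N : Type) where
  pref : N → N → N → Prop
  irrefl : ∀ a b, ¬ pref a b b
  trans : ∀ a b c d, pref a b c → pref a c d → pref a b d

variable {N : Type} [Fintype N] [DecidableEq N]

/-- `(a,b)` is an arc of the acceptability graph `G^H` (including all loops). -/
def accepts (H : HousingMarket N) (a b : N) : Prop := a = b ∨ H.pref a a b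

/-- An allocation: a permutation of the agents all of whose arcs are acceptable. -/
def IsAllocation (H : HousingMarket N) (X : N → N) : Prop :=
  Function.Bijective X ∧ ∀ a, accepts H a (X a)

/-- A blocking cycle for `X`: a directed cycle of the acceptability graph (given as a
nonempty duplicate-free list, with successor `c.next`) on which every agent strictly
prefers the house of her successor to the house she gets in `X`. -/
def IsBlockingCycle (H : HousingMarket N) (X : N → N) (c : List N) : Prop :=
  c ≠ [] ∧ c.Nodup ∧
    ∀ (a : N) (h : a ∈ c), accepts H a (c.next a h) ∧ H.pref a (X a) (c.next a h)

/-- `X` is in the core of `H`. -/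
def InCore (H : HousingMarket N) (X : N → N) : Prop :=
  IsAllocation H X ∧ ∀ c : List N, ¬ IsBlockingCycle H X c

/-- A digraph (given by its arc relation `R`) has a directed cycle. -/
def HasCycle (R : N → N → Prop) : Prop :=
  ∃ c : List N, c ≠ [] ∧ c.Nodup ∧ ∀ (a : N) (h : a ∈ c), R a (c.next a h)

/-- Preferences of every agent are strict total orders on her acceptable set. -/
def StrictPrefs (H : HousingMarket N) : Prop :=
  ∀ a b c, accepts H a b → accepts H a c → b ≠ c → H.pref a b c ∨ H.pref a c b

/-- `H'` is a `(p,q)`-improvement of `H`: only `q`'s preferences change, they agree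
on `N \ {p}`, and the value of `p`'s house weakly rises for `q`. -/
def IsPQImprovement (H H' : HousingMarket N) (p q : N) : Prop :=
  (∀ a, a ≠ q → H.pref a = H'.pref a) ∧
  (∀ a b, a ≠ p → b ≠ p → (H.pref q a b ↔ H'.pref q a b)) ∧
  (∀ a, H.pref q a p → H'.pref q a p)

/-- `H'` is a `p`-improvement of `H`: a finite composition of `(p,q)`-improvements. -/
def IsPImprovement (H H' : HousingMarket N) (p : N) : Prop :=
  Relation.ReflTransGen (fun K K' => ∃ q, IsPQImprovement K K' p q) H H'

/-- A weakly blocking cycle: every agent on the cycle weakly prefers her successor's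
house to her `X`-house, and at least one strictly prefers it. -/
def IsWeaklyBlockingCycle (H : HousingMarket N) (X : N → N) (c : List N) : Prop :=
  c ≠ [] ∧ c.Nodup ∧
    (∀ (a : N) (h : a ∈ c), accepts H a (c.next a h) ∧ ¬ H.pref a (c.next a h) (X a)) ∧
    ∃ (a : N) (h : a ∈ c), H.pref a (X a) (c.next a h)

/-- The strict core. -/
def InStrictCore (H : HousingMarket N) (X : N → N) : Prop :=
  IsAllocation H X ∧ ∀ c : List N, ¬ IsWeaklyBlockingCycle H X c

/-! In the market of the remaining agents `S`, let every agent point at her favorite acceptable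
agent of `S`; the first TTC round trades along the cycles of this map. A strict core allocation
of `S` gives every agent on such a cycle her favorite house, since otherwise the cycle itself
blocks weakly; so it maps the rest of `S` onto itself and lies in the strict core of that smaller
market. Conversely, trading along the cycles and completing by a strict core allocation of the
rest gives a strict core allocation of `S`. Strong induction on `S` yields existence and
uniqueness together. -/

namespace List

variable {α : Type*} [DecidableEq α]

theorem forall_mem_of_next_closed {l : List α} (hl : l.Nodup) {p : α → Prop}
    (hstep : ∀ x (hx : x ∈ l), p x → p (l.next x hx)) {a : α} (ha : a ∈ l) (hpa : p a) :
    ∀ b ∈ l, p b := by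
  obtain ⟨i, hi, rfl⟩ := getElem_of_mem ha
  have hiter : ∀ n, p (l[(i + n) % l.length]'(Nat.mod_lt _ (by omega))) := by
    intro n
    induction n with
    | zero => simpa [Nat.mod_eq_of_lt hi] using hpa
    | succ n ih =>
      have := hstep _ (getElem_mem _) ih
      rw [next_getElem l hl] at this
      simpa only [Nat.mod_add_mod, ← Nat.add_assoc] using this
  intro b hb
  obtain ⟨j, hj, rfl⟩ := getElem_of_mem hb
  have hidx : (i + (l.length + j - i)) % l.length = j := by
    rw [show i + (l.length + j - i) = l.length + j by omega, Nat.add_mod_left,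
      Nat.mod_eq_of_lt hj]
  simpa [hidx] using hiter (l.length + j - i)

end List

namespace Function

variable {α : Type*} {f : α → α}

theorem exists_iterate_mem_periodicPts [Finite α] (f : α → α) (x : α) :
    ∃ n, f^[n] x ∈ periodicPts f := by
  obtain ⟨m, n, heq, hne⟩ : ∃ m n, f^[m] x = f^[n] x ∧ m ≠ n := by
    simpa [Injective] using not_injective_infinite_finite (f^[·] x)
  wlog hlt : m < n generalizing m n
  · exact this n m heq.symm hne.symm (by omega)
  refine ⟨m, mk_mem_periodicPts (n := n - m) (by omega) ?_⟩
  rw [IsPeriodicPt, IsFixedPt, ← iterate_add_apply, Nat.sub_add_cancel hlt.le, heq]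

theorem exists_nodup_next_eq_of_mem_periodicPts [DecidableEq α] {x : α}
    (hx : x ∈ periodicPts f) :
    ∃ c : List α, c.Nodup ∧ (∀ y, y ∈ c ↔ ∃ n, f^[n] x = y) ∧
      ∀ y (hy : y ∈ c), c.next y hy = f y := by
  have hnd : ((List.range (minimalPeriod f x)).map (f^[·] x)).Nodup :=
    Cycle.nodup_coe_iff.mp nodup_periodicOrbit
  refine ⟨_, hnd, fun y => Cycle.mem_coe_iff.symm.trans (mem_periodicOrbit_iff hx), ?_⟩
  intro y hy
  obtain ⟨i, hi, rfl⟩ := List.getElem_of_mem hy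
  rw [List.next_getElem _ hnd]
  simp [iterate_mod_minimalPeriod_eq, iterate_succ_apply']

end Function

omit [Fintype N] in
theorem IsWeaklyBlockingCycle.congr {H : HousingMarket N} {X Y : N → N} {c : List N}
    (h : ∀ a ∈ c, X a = Y a) (hc : IsWeaklyBlockingCycle H X c) :
    IsWeaklyBlockingCycle H Y c := by
  obtain ⟨hne, hnd, hweak, a, ha, hgain⟩ := hc
  exact ⟨hne, hnd, fun x hx => h x hx ▸ hweak x hx, a, ha, h a ha ▸ hgain⟩

open Function

namespace HousingMarket

variable (H : HousingMarket N) (S : Finset N) {a b : N}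

omit [DecidableEq N] in
theorem exists_favorite (ha : a ∈ S) :
    ∃ b ∈ S, accepts H a b ∧ ∀ c ∈ S, accepts H a c → ¬ H.pref a b c := by
  have : IsTrans N (fun b c => H.pref a c b) := ⟨fun b c d hcb hdc => H.trans a d c b hdc hcb⟩
  have : Std.Irrefl (fun b c : N => H.pref a c b) := ⟨H.irrefl a⟩
  obtain ⟨b, ⟨hbS, hb⟩, hmax⟩ :=
    (Finite.wellFounded_of_trans_of_irrefl (fun b c : N => H.pref a c b)).has_min
      {b | b ∈ S ∧ accepts H a b} ⟨a, ha, Or.inl rfl⟩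
  exact ⟨b, hbS, hb, fun c hcS hc => hmax c ⟨hcS, hc⟩⟩

noncomputable def favorite (a : N) : N :=
  if ha : a ∈ S then (H.exists_favorite S ha).choose else a

open Classical in
noncomputable def tradingCycles : Finset N :=
  S.filter (· ∈ periodicPts (H.favorite S))

variable {H S}

theorem favorite_spec (ha : a ∈ S) :
    H.favorite S a ∈ S ∧ accepts H a (H.favorite S a) ∧
      ∀ c ∈ S, accepts H a c → ¬ H.pref a (H.favorite S a) c := by
  rw [favorite, dif_pos ha]
  exact (H.exists_favorite S ha).choose_spec

theorem mapsTo_favorite : Set.MapsTo (H.favorite S) S S := fun _ ha => (favorite_spec ha).1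

theorem eq_favorite_or_pref_favorite (hstrict : StrictPrefs H) (ha : a ∈ S) (hb : b ∈ S)
    (hab : accepts H a b) : b = H.favorite S a ∨ H.pref a b (H.favorite S a) := by
  obtain ⟨-, hfav, hmax⟩ := favorite_spec ha
  by_cases heq : b = H.favorite S a
  · exact .inl heq
  · exact .inr ((hstrict a b _ hab hfav heq).resolve_right (hmax b hb hab))

theorem mem_tradingCycles :
    a ∈ H.tradingCycles S ↔ a ∈ S ∧ a ∈ periodicPts (H.favorite S) := by
  simp [tradingCycles]

theorem tradingCycles_subset : H.tradingCycles S ⊆ S := fun _ ha => (mem_tradingCycles.1 ha).1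

theorem tradingCycles_nonempty (hS : S.Nonempty) : (H.tradingCycles S).Nonempty := by
  obtain ⟨a, ha⟩ := hS
  obtain ⟨n, hn⟩ := exists_iterate_mem_periodicPts (H.favorite S) a
  exact ⟨_, mem_tradingCycles.2 ⟨mapsTo_favorite.iterate n ha, hn⟩⟩

theorem bijOn_favorite_tradingCycles :
    Set.BijOn (H.favorite S) (H.tradingCycles S) (H.tradingCycles S) := by
  have hmaps : Set.MapsTo (H.favorite S) (H.tradingCycles S) (H.tradingCycles S) :=
    fun a ha => by
      obtain ⟨haS, hper⟩ := mem_tradingCycles.1 ha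
      exact mem_tradingCycles.2 ⟨mapsTo_favorite haS, (bijOn_periodicPts _).mapsTo hper⟩
  refine (Finset.finite_toSet _).injOn_iff_bijOn_of_mapsTo hmaps |>.1 ?_
  exact (bijOn_periodicPts _).injOn.mono fun a ha => (mem_tradingCycles.1 ha).2

theorem bijOn_piecewise_favorite {X : N → N}
    (hX : Set.BijOn X ↑(S \ H.tradingCycles S) ↑(S \ H.tradingCycles S)) :
    Set.BijOn ((H.tradingCycles S).piecewise (H.favorite S) X) S S := by
  set P := H.tradingCycles S
  have hP : P ⊆ S := tradingCycles_subset
  have hmaps : Set.MapsTo (P.piecewise (H.favorite S) X) S S := fun a ha => by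
    by_cases haP : a ∈ P
    · rw [Finset.piecewise_eq_of_mem _ _ _ haP]
      exact hP (bijOn_favorite_tradingCycles.mapsTo haP)
    · rw [Finset.piecewise_eq_of_notMem _ _ _ haP]
      exact (Finset.mem_sdiff.1 (hX.mapsTo (Finset.mem_sdiff.2 ⟨ha, haP⟩))).1
  refine (Finset.finite_toSet _).surjOn_iff_bijOn_of_mapsTo hmaps |>.1 fun b hb => ?_
  by_cases hbP : b ∈ P
  · obtain ⟨a, haP, rfl⟩ := bijOn_favorite_tradingCycles.surjOn hbP
    exact ⟨a, hP haP, Finset.piecewise_eq_of_mem _ _ _ haP⟩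
  · obtain ⟨a, ha, rfl⟩ := hX.surjOn (Finset.mem_sdiff.2 ⟨hb, hbP⟩)
    exact ⟨a, (Finset.mem_sdiff.1 ha).1,
      Finset.piecewise_eq_of_notMem _ _ _ (Finset.mem_sdiff.1 ha).2⟩

/-- A weakly blocking cycle through an agent who holds her favorite house must follow the pointers
from there on, so it stays on the trading cycles, where nobody strictly improves. -/
theorem not_isWeaklyBlockingCycle_of_mem_tradingCycles (hstrict : StrictPrefs H) {X : N → N}
    (hX : ∀ a ∈ H.tradingCycles S, X a = H.favorite S a) {c : List N}
    (hcS : ∀ a ∈ c, a ∈ S) (hac : a ∈ c) (haP : a ∈ H.tradingCycles S) :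
    ¬ IsWeaklyBlockingCycle H X c := by
  rintro ⟨-, hnd, hweak, b, hbc, hpref⟩
  have hnext : ∀ x (hx : x ∈ c), x ∈ H.tradingCycles S → c.next x hx = X x := by
    intro x hx hxP
    rw [hX x hxP]
    refine (eq_favorite_or_pref_favorite hstrict (hcS x hx) (hcS _ (c.next_mem x hx))
      (hweak x hx).1).resolve_right ?_
    exact hX x hxP ▸ (hweak x hx).2
  have hall : ∀ x ∈ c, x ∈ H.tradingCycles S := by
    refine c.forall_mem_of_next_closed hnd (fun x hx hxP => ?_) hac haP
    rw [hnext x hx hxP, hX x hxP]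
    exact bijOn_favorite_tradingCycles.mapsTo hxP
  rw [hnext b hbc (hall b hbc)] at hpref
  exact H.irrefl b _ hpref

end HousingMarket

open HousingMarket

/-- The strict core of the submarket formed by `S`, the agents outside `S` keeping their houses. -/
structure InStrictCoreOn (H : HousingMarket N) (S : Finset N) (X : N → N) : Prop where
  eq_self_of_notMem : ∀ a ∉ S, X a = a
  bijOn : Set.BijOn X S S
  accepts_apply : ∀ a ∈ S, accepts H a (X a)
  not_isWeaklyBlockingCycle :
    ∀ c : List N, (∀ a ∈ c, a ∈ S) → ¬ IsWeaklyBlockingCycle H X c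

namespace InStrictCoreOn

variable {H : HousingMarket N} {S : Finset N} {X Y : N → N}

theorem univ_iff : InStrictCoreOn H Finset.univ X ↔ InStrictCore H X := by
  have hbij :
      Set.BijOn X ↑(Finset.univ : Finset N) ↑(Finset.univ : Finset N) ↔ Bijective X := by
    rw [Finset.coe_univ, Set.bijOn_univ]
  exact ⟨fun h => ⟨⟨hbij.1 h.bijOn, fun a => h.accepts_apply a (Finset.mem_univ a)⟩,
      fun c => h.not_isWeaklyBlockingCycle c fun a _ => Finset.mem_univ a⟩,
    fun h => ⟨fun a ha => absurd (Finset.mem_univ a) ha, hbij.2 h.1.1, fun a _ => h.1.2 a,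
      fun c _ => h.2 c⟩⟩

omit [Fintype N] in
theorem empty_id : InStrictCoreOn H ∅ id where
  eq_self_of_notMem _ _ := rfl
  bijOn := Set.bijOn_id _
  accepts_apply _ ha := absurd ha (Finset.notMem_empty _)
  not_isWeaklyBlockingCycle _ hc := fun ⟨hne, _⟩ =>
    Finset.notMem_empty _ (hc _ (List.getLast_mem hne))

theorem eq_favorite (hstrict : StrictPrefs H) (hX : InStrictCoreOn H S X) {a : N}
    (ha : a ∈ H.tradingCycles S) : X a = H.favorite S a := by
  by_contra hne
  obtain ⟨haS, hper⟩ := mem_tradingCycles.1 ha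
  obtain ⟨c, hnd, hmem, hnext⟩ := Function.exists_nodup_next_eq_of_mem_periodicPts hper
  have hcS : ∀ x ∈ c, x ∈ S := fun x hx => by
    obtain ⟨n, rfl⟩ := (hmem x).1 hx
    exact mapsTo_favorite.iterate n haS
  have hac : a ∈ c := (hmem a).2 ⟨0, rfl⟩
  refine hX.not_isWeaklyBlockingCycle c hcS
    ⟨List.ne_nil_of_mem hac, hnd, fun x hx => ?_, a, hac, ?_⟩
  · obtain ⟨-, hfav, hmax⟩ := favorite_spec (hcS x hx)
    rw [hnext x hx]
    exact ⟨hfav, hmax _ (hX.bijOn.mapsTo (hcS x hx)) (hX.accepts_apply x (hcS x hx))⟩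
  · rw [hnext a hac]
    exact (eq_favorite_or_pref_favorite hstrict haS (hX.bijOn.mapsTo haS)
      (hX.accepts_apply a haS)).resolve_left hne

theorem piecewise_favorite (hstrict : StrictPrefs H)
    (hX : InStrictCoreOn H (S \ H.tradingCycles S) X) :
    InStrictCoreOn H S ((H.tradingCycles S).piecewise (H.favorite S) X) := by
  set P := H.tradingCycles S
  have hP : P ⊆ S := tradingCycles_subset
  have hrest : ∀ {a}, a ∈ S → a ∉ P → a ∈ S \ P :=
    fun haS haP => Finset.mem_sdiff.2 ⟨haS, haP⟩
  refine ⟨fun a ha => ?_, ?_, fun a ha => ?_, fun c hc => ?_⟩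
  · rw [Finset.piecewise_eq_of_notMem _ _ _ fun haP => ha (hP haP)]
    exact hX.eq_self_of_notMem a fun h => ha (Finset.mem_sdiff.1 h).1
  · exact bijOn_piecewise_favorite hX.bijOn
  · by_cases haP : a ∈ P
    · rw [Finset.piecewise_eq_of_mem _ _ _ haP]
      exact (favorite_spec ha).2.1
    · rw [Finset.piecewise_eq_of_notMem _ _ _ haP]
      exact hX.accepts_apply a (hrest ha haP)
  · by_cases hmeet : ∃ a ∈ c, a ∈ P
    · obtain ⟨a, hac, haP⟩ := hmeet
      exact not_isWeaklyBlockingCycle_of_mem_tradingCycles hstrict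
        (fun b hb => Finset.piecewise_eq_of_mem _ _ _ hb) hc hac haP
    · push Not at hmeet
      exact fun hblock => hX.not_isWeaklyBlockingCycle c (fun a ha => hrest (hc a ha) (hmeet a ha))
        (hblock.congr fun a ha => Finset.piecewise_eq_of_notMem _ _ _ (hmeet a ha))

theorem restrict (hstrict : StrictPrefs H) (hY : InStrictCoreOn H S Y) :
    InStrictCoreOn H (S \ H.tradingCycles S) ((S \ H.tradingCycles S).piecewise Y id) := by
  set P := H.tradingCycles S
  have hYP : ∀ a ∈ P, Y a = H.favorite S a := fun a ha => hY.eq_favorite hstrict ha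
  have hmaps : Set.MapsTo Y ↑(S \ P) ↑(S \ P) := fun a ha => by
    obtain ⟨haS, haP⟩ := Finset.mem_sdiff.1 ha
    refine Finset.mem_sdiff.2 ⟨hY.bijOn.mapsTo haS, fun hYa => haP ?_⟩
    obtain ⟨b, hbP, hb⟩ := bijOn_favorite_tradingCycles.surjOn hYa
    rw [← hYP b hbP] at hb
    exact hY.bijOn.injOn (tradingCycles_subset hbP) haS hb ▸ hbP
  have hbij : Set.BijOn Y ↑(S \ P) ↑(S \ P) :=
    (Finset.finite_toSet _).injOn_iff_bijOn_of_mapsTo hmaps |>.1 <|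
      hY.bijOn.injOn.mono fun a ha => (Finset.mem_sdiff.1 ha).1
  have heq : Set.EqOn Y ((S \ P).piecewise Y id) ↑(S \ P) :=
    fun a ha => (Finset.piecewise_eq_of_mem _ _ _ ha).symm
  refine ⟨fun a ha => Finset.piecewise_eq_of_notMem _ _ _ ha, hbij.congr heq, fun a ha => ?_,
    fun c hc hblock => ?_⟩
  · rw [← heq ha]
    exact hY.accepts_apply a (Finset.mem_sdiff.1 ha).1
  · exact hY.not_isWeaklyBlockingCycle c (fun a ha => (Finset.mem_sdiff.1 (hc a ha)).1)
      (hblock.congr fun a ha => (heq (hc a ha)).symm)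

theorem eq_piecewise (hstrict : StrictPrefs H) (hY : InStrictCoreOn H S Y) :
    Y = (H.tradingCycles S).piecewise (H.favorite S) ((S \ H.tradingCycles S).piecewise Y id) := by
  funext a
  by_cases haP : a ∈ H.tradingCycles S
  · rw [Finset.piecewise_eq_of_mem _ _ _ haP, hY.eq_favorite hstrict haP]
  rw [Finset.piecewise_eq_of_notMem _ _ _ haP]
  by_cases haS : a ∈ S
  · rw [Finset.piecewise_eq_of_mem _ _ _ (Finset.mem_sdiff.2 ⟨haS, haP⟩)]
  · rw [Finset.piecewise_eq_of_notMem _ _ _ fun h => haS (Finset.mem_sdiff.1 h).1,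
      hY.eq_self_of_notMem a haS, id]

end InStrictCoreOn

theorem existsUnique_inStrictCoreOn {H : HousingMarket N} (hstrict : StrictPrefs H)
    (S : Finset N) : ∃! X : N → N, InStrictCoreOn H S X := by
  induction S using Finset.strongInduction with
  | H S ih =>
  rcases S.eq_empty_or_nonempty with rfl | hS
  · exact ⟨id, .empty_id, fun Y hY => funext fun a => hY.eq_self_of_notMem a (by simp)⟩
  obtain ⟨X, hX, huniq⟩ := ih _ (Finset.sdiff_ssubset tradingCycles_subset
    (tradingCycles_nonempty hS))
  refine ⟨_, hX.piecewise_favorite hstrict, fun Y hY => ?_⟩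
  rw [hY.eq_piecewise hstrict, huniq _ (hY.restrict hstrict)]

/-- with strict total preferences on acceptable sets, the strict core
consists of exactly one allocation (the TTC allocation). -/
theorem stmt3 (H : HousingMarket N) (hstrict : StrictPrefs H) :
    ∃! X : N → N, InStrictCore H X := by
  simpa only [InStrictCoreOn.univ_iff] using existsUnique_inStrictCoreOn hstrict Finset.univ
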